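/- arXiv:2009.00373 — 3 statements merged into one kernel-verified Lean document; each statement's English description precedes it below -/
import Mathlib

section
/- With L, d, D as above, for a finite set S ⊆ L with |S| ≥ 2 and x ∉ S, the diversity of the enlarged set decomposes as D(S ∪ {x}) = d̂ + D̂, where d̂ = min_{l ∈ S} d(x, l) and D̂ = Σ_{l ∈ S} min( min_{l' ∈ S, l' ≠ l} d(l, l'), d(l, x) ). -/
open Finset

noncomputable def dmin {L : Type*} [DecidableEq L] (d : L → L → ℝ) (x : L) (T : Finset L) : ℝ :=
  sInf ((T.image (d x) : Finset ℝ) : Set ℝ)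

noncomputable def aggDiv {L : Type*} [DecidableEq L] (d : L → L → ℝ) (S : Finset L) : ℝ :=
  ∑ l ∈ S, dmin d l (S.erase l)

lemma dmin_insert {L : Type*} [DecidableEq L] (d : L → L → ℝ) (l x : L) {T : Finset L}
    (hT : T.Nonempty) : dmin d l (insert x T) = min (d l x) (dmin d l T) := by
  rw [dmin, dmin, image_insert, coe_insert,
    csInf_insert (Finset.bddBelow _) (by simpa using hT.image (d l))]

theorem stmt1_general {L : Type*} [DecidableEq L] (d : L → L → ℝ)
    (S : Finset L) (hS : 2 ≤ S.card) (x : L) (hx : x ∉ S) :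
    aggDiv d (insert x S) =
      dmin d x S + ∑ l ∈ S, min (dmin d l (S.erase l)) (d l x) := by
  rw [aggDiv, sum_insert hx, erase_insert hx]
  congr 1
  refine sum_congr rfl fun l hl => ?_
  have hxl : x ≠ l := ne_of_mem_of_not_mem hl hx |>.symm
  -- `dmin` over an empty set is the junk value `sInf ∅ = 0`, so `l` needs a neighbour in `S`.
  have hSl : (S.erase l).Nonempty := (one_lt_card_iff_nontrivial.mp hS).erase_nonempty
  rw [erase_insert_of_ne hxl, dmin_insert d l x hSl, min_comm]

theorem stmt1 {L : Type*} [Fintype L] [DecidableEq L] (d : L → L → ℝ)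
    (hsym : ∀ a b, d a b = d b a) (hnn : ∀ a b, 0 ≤ d a b)
    (S : Finset L) (hS : 2 ≤ S.card) (x : L) (hx : x ∉ S) :
    aggDiv d (insert x S) =
      dmin d x S + ∑ l ∈ S, min (dmin d l (S.erase l)) (d l x) :=
  stmt1_general d S hS x hx
end

section
/- With L, d, D as above, for a finite set S ⊆ L with |S| ≥ 2 and x ∉ S, the diversity gain δ_d = D(S ∪ {x}) − D(S) satisfies δ_d ≤ d̂, where d̂ = min_{l ∈ S} d(x, l). -/
/-!
Adding `x` to `S` contributes the new summand `dmin d x S`, while every old summand can only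
shrink, since each `l ∈ S` now takes its minimum over the larger set `insert x (S.erase l)`.
This needs `S.erase l ≠ ∅`: the minimum over the empty set is the junk value `sInf ∅ = 0`.
-/

open Finset

lemma dmin_le_dmin_of_subset {L : Type*} [DecidableEq L] (d : L → L → ℝ) (x : L)
    {T T' : Finset L} (hsub : T ⊆ T') (hT : T.Nonempty) : dmin d x T' ≤ dmin d x T :=
  csInf_le_csInf (T'.image (d x)).finite_toSet.bddBelow (hT.image (d x)).to_set
    (by exact_mod_cast image_subset_image hsub)

lemma aggDiv_insert_le {L : Type*} [DecidableEq L] (d : L → L → ℝ) {S : Finset L}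
    (hS : S.card ≠ 1) {x : L} (hx : x ∉ S) :
    aggDiv d (insert x S) ≤ dmin d x S + aggDiv d S := by
  unfold aggDiv
  rw [sum_insert hx, erase_insert hx]
  gcongr with l hl
  have hxl : x ≠ l := by rintro rfl; exact hx hl
  have hne : (S.erase l).Nonempty := by
    rw [← card_pos, card_erase_of_mem hl]
    have := card_pos.mpr ⟨l, hl⟩
    omega
  rw [erase_insert_of_ne hxl]
  exact dmin_le_dmin_of_subset d l (subset_insert x _) hne

theorem stmt3_general {L : Type*} [DecidableEq L] (d : L → L → ℝ)
    (S : Finset L) (hS : 2 ≤ S.card) (x : L) (hx : x ∉ S) :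
    aggDiv d (insert x S) - aggDiv d S ≤ dmin d x S := by
  linarith [aggDiv_insert_le d (by omega : S.card ≠ 1) hx]

theorem stmt3 {L : Type*} [Fintype L] [DecidableEq L] (d : L → L → ℝ)
    (hsym : ∀ a b, d a b = d b a) (hnn : ∀ a b, 0 ≤ d a b)
    (S : Finset L) (hS : 2 ≤ S.card) (x : L) (hx : x ∉ S) :
    aggDiv d (insert x S) - aggDiv d S ≤ dmin d x S :=
  stmt3_general d S hS x hx
end

section
/- With L, d, D, R, F as above, let S ⊆ L with |S| ≥ 2, S_b ⊆ L a previously found feasible set, and S' ⊆ L \ S with |S'| = m ≥ 1. If ω · R_max + (1−ω) · D_max < F(S_b) − F(S), where R_max is the sum of the m largest relevance values over L \ S and D_max is the sum of the m largest values of x ↦ min_{l ∈ S} d(x, l) over L \ S, then F(S ∪ S') < F(S_b). -/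
open Finset

noncomputable def topSum {L : Type*} (SR : Finset L) (m : ℕ) (f : L → ℝ) : ℝ :=
  sSup { s : ℝ | ∃ T : Finset L, T ⊆ SR ∧ T.card = m ∧ s = ∑ l ∈ T, f l }

lemma le_topSum {L : Type*} {SR T : Finset L} {m : ℕ} (f : L → ℝ) (hT : T ⊆ SR)
    (hcard : T.card = m) : ∑ l ∈ T, f l ≤ topSum SR m f := by
  refine le_csSup ?_ ⟨T, hT, hcard, rfl⟩
  refine ((SR.powerset.image fun T => ∑ l ∈ T, f l).finite_toSet.subset ?_).bddAbove
  rintro s ⟨T, hT, -, rfl⟩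
  simpa using ⟨T, hT, rfl⟩

section

variable {L : Type*} [DecidableEq L] (d : L → L → ℝ)

lemma dmin_le_dmin_of_subset_s8 (x : L) {A B : Finset L} (hAB : A ⊆ B) (hA : A.Nonempty) :
    dmin d x B ≤ dmin d x A :=
  csInf_le_csInf (B.image (d x)).finite_toSet.bddBelow (by exact_mod_cast hA.image _)
    (by exact_mod_cast image_subset_image hAB)

/-- Adding points to `S` only shrinks the nearest-neighbour distances of the old points, and each
new point `l` contributes at most its distance to `S`. The bound `2 ≤ S.card` keeps every
`S.erase l` nonempty, since `dmin` over the empty set is the junk value `sInf ∅ = 0`. -/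
lemma aggDiv_union_le {S S' : Finset L} (hS : 2 ≤ S.card) (hdisj : Disjoint S S') :
    aggDiv d (S ∪ S') ≤ aggDiv d S + ∑ l ∈ S', dmin d l S := by
  unfold aggDiv
  rw [sum_union hdisj]
  gcongr with l hl l hl
  · refine dmin_le_dmin_of_subset_s8 d l (erase_subset_erase _ subset_union_left) ?_
    rw [← card_pos, card_erase_of_mem hl]
    omega
  · refine dmin_le_dmin_of_subset_s8 d l (fun a ha => mem_erase.mpr ⟨?_, mem_union_left _ ha⟩)
      (card_pos.mp (by omega))
    rintro rfl
    exact disjoint_left.mp hdisj ha hl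

lemma objective_union_le [Fintype L] (R : L → ℝ) {ω : ℝ} (hω0 : 0 ≤ ω) (hω1 : ω ≤ 1)
    {S S' : Finset L} (hS : 2 ≤ S.card) (hS' : S' ⊆ Sᶜ) {m : ℕ} (hcard : S'.card = m) :
    ω * ∑ l ∈ S ∪ S', R l + (1 - ω) * aggDiv d (S ∪ S') ≤
      ω * ∑ l ∈ S, R l + (1 - ω) * aggDiv d S +
        (ω * topSum Sᶜ m R + (1 - ω) * topSum Sᶜ m (fun x => dmin d x S)) := by
  have hdisj : Disjoint S S' := disjoint_left.mpr fun _ ha hb => mem_compl.mp (hS' hb) ha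
  have hR : ∑ l ∈ S', R l ≤ topSum Sᶜ m R := le_topSum R hS' hcard
  have hD : ∑ l ∈ S', dmin d l S ≤ topSum Sᶜ m (fun x => dmin d x S) :=
    le_topSum _ hS' hcard
  have hagg := aggDiv_union_le d hS hdisj
  rw [sum_union hdisj]
  have h1 : 0 ≤ 1 - ω := by linarith
  linarith [mul_le_mul_of_nonneg_left hR hω0, mul_le_mul_of_nonneg_left hD h1,
    mul_le_mul_of_nonneg_left hagg h1]

end

theorem stmt8_general {L : Type*} [Fintype L] [DecidableEq L] (d : L → L → ℝ)
    (R : L → ℝ) (ω : ℝ) (hω0 : 0 < ω) (hω1 : ω < 1)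
    (S S' S_b : Finset L) (hS : 2 ≤ S.card) (hS' : S' ⊆ Sᶜ) (m : ℕ)
    (hcard : S'.card = m)
    (hbound : ω * topSum Sᶜ m R + (1 - ω) * topSum Sᶜ m (fun x => dmin d x S) <
      (ω * ∑ l ∈ S_b, R l + (1 - ω) * aggDiv d S_b) -
        (ω * ∑ l ∈ S, R l + (1 - ω) * aggDiv d S)) :
    ω * ∑ l ∈ S ∪ S', R l + (1 - ω) * aggDiv d (S ∪ S') <
      ω * ∑ l ∈ S_b, R l + (1 - ω) * aggDiv d S_b := by
  have := objective_union_le d R hω0.le hω1.le hS hS' hcard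
  linarith

theorem stmt8 {L : Type*} [Fintype L] [DecidableEq L] (d : L → L → ℝ)
    (hsym : ∀ a b, d a b = d b a) (hnn : ∀ a b, 0 ≤ d a b)
    (R : L → ℝ) (hR : ∀ l, 0 ≤ R l) (ω : ℝ) (hω0 : 0 < ω) (hω1 : ω < 1)
    (S S' S_b : Finset L) (hS : 2 ≤ S.card) (hS' : S' ⊆ Sᶜ) (m : ℕ) (hm : 1 ≤ m)
    (hcard : S'.card = m)
    (hbound : ω * topSum Sᶜ m R + (1 - ω) * topSum Sᶜ m (fun x => dmin d x S) <
      (ω * ∑ l ∈ S_b, R l + (1 - ω) * aggDiv d S_b) -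
        (ω * ∑ l ∈ S, R l + (1 - ω) * aggDiv d S)) :
    ω * ∑ l ∈ S ∪ S', R l + (1 - ω) * aggDiv d (S ∪ S') <
      ω * ∑ l ∈ S_b, R l + (1 - ω) * aggDiv d S_b :=
  stmt8_general d R ω hω0 hω1 S S' S_b hS hS' m hcard hbound
end
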